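/- arXiv:1805.05604 — 3 statements merged into one kernel-verified Lean document; each statement's English description precedes it below -/
import Mathlib

section
/- Let A be a finite set of vectors in ℤ^n. Then the intersection of the real cone generated by A with the rational span of A equals the rational cone generated by A, i.e., ℝ_{≥0}A ∩ ℚA = ℚ_{≥0}A. -/
open Finset

/-- The cast of an integer vector to a real vector. -/
def castR {n : ℕ} (a : Fin n → ℤ) : Fin n → ℝ := fun i => (a i : ℝ)

/-- The cast of an integer vector to a rational vector. -/
def castQ {n : ℕ} (a : Fin n → ℤ) : Fin n → ℚ := fun i => (a i : ℚ)

/-- The cast of an integer vector to a complex vector. -/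
def castC {n : ℕ} (a : Fin n → ℤ) : Fin n → ℂ := fun i => (a i : ℂ)

/-- The real convex cone `ℝ_{≥0}A` generated by a finite set `A ⊂ ℤ^n`. -/
def realCone {n : ℕ} (A : Finset (Fin n → ℤ)) : Set (Fin n → ℝ) :=
  {x | ∃ c : (Fin n → ℤ) → ℝ, (∀ a, 0 ≤ c a) ∧ x = ∑ a ∈ A, c a • castR a}

/-- The rational span `ℚA`, viewed inside `ℝ^n`. -/
def ratSpan {n : ℕ} (A : Finset (Fin n → ℤ)) : Set (Fin n → ℝ) :=
  {x | ∃ c : (Fin n → ℤ) → ℚ, x = ∑ a ∈ A, (c a : ℝ) • castR a}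

/-- The rational cone `ℚ_{≥0}A`, viewed inside `ℝ^n`. -/
def ratCone {n : ℕ} (A : Finset (Fin n → ℤ)) : Set (Fin n → ℝ) :=
  {x | ∃ c : (Fin n → ℤ) → ℚ, (∀ a, 0 ≤ c a) ∧ x = ∑ a ∈ A, (c a : ℝ) • castR a}

/-- `F` is a face of `A`: `F = A ∩ ker h` for some `h : ℤA →+ ℤ` with `h(A) ⊆ ℕ`. -/
def IsFace {n : ℕ} (A F : Finset (Fin n → ℤ)) : Prop :=
  F ⊆ A ∧ ∃ h : AddSubgroup.closure (A : Set (Fin n → ℤ)) →+ ℤ,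
    ∀ (a : Fin n → ℤ) (ha : a ∈ A),
      0 ≤ h ⟨a, AddSubgroup.subset_closure (Finset.mem_coe.mpr ha)⟩ ∧
      (a ∈ F ↔ h ⟨a, AddSubgroup.subset_closure (Finset.mem_coe.mpr ha)⟩ = 0)

/-- The rank of the subgroup `ℤA`, i.e. the dimension of the `ℚ`-span of `A`. -/
noncomputable def rkQ {n : ℕ} (A : Finset (Fin n → ℤ)) : ℕ :=
  Module.finrank ℚ (Submodule.span ℚ (castQ '' (A : Set (Fin n → ℤ))))

/-- `A` is normal: `ℝ_{≥0}A ∩ ℤA = ℕA`. -/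
def IsNormal {n : ℕ} (A : Finset (Fin n → ℤ)) : Prop :=
  ∀ v : Fin n → ℤ,
    (v ∈ AddSubgroup.closure (A : Set (Fin n → ℤ)) ∧ castR v ∈ realCone A) ↔
      v ∈ AddSubmonoid.closure (A : Set (Fin n → ℤ))

/-!
By the conic Carathéodory theorem, a point of `ℝ_{≥0}A` is a nonnegative real combination of a
linearly independent subset of `A`. If the point also lies in `ℚA`, it has rational coordinates,
and the coefficients of a combination of linearly independent rational vectors with a rational
result are themselves rational: a `ℚ`-linear retraction `π : ℝ → ℚ`, applied to the
coefficients, yields a combination with the same (rational) value, so linear independence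
forces `π` to fix every coefficient.
-/

section ConicCaratheodory

variable {𝕜 E ι : Type*} [Field 𝕜] [LinearOrder 𝕜] [IsStrictOrderedRing 𝕜]
  [AddCommGroup E] [Module 𝕜 E] {v : ι → E}

theorem exists_nonneg_sum_erase_eq_of_not_linearIndepOn [DecidableEq ι] {s : Finset ι}
    (hs : ¬LinearIndepOn 𝕜 v (s : Set ι)) {c : ι → 𝕜} (hc : ∀ i ∈ s, 0 ≤ c i) :
    ∃ j ∈ s, ∃ d : ι → 𝕜, (∀ i ∈ s.erase j, 0 ≤ d i) ∧
      ∑ i ∈ s.erase j, d i • v i = ∑ i ∈ s, c i • v i := by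
  obtain ⟨g, hg, hpos⟩ : ∃ g : ι → 𝕜, ∑ i ∈ s, g i • v i = 0 ∧ ∃ i ∈ s, 0 < g i := by
    obtain ⟨g, hg, i, hi, hgi⟩ := not_linearIndepOn_finset_iff.mp hs
    rcases hgi.lt_or_gt with hneg | hpos
    · exact ⟨-g, by simp [neg_smul, hg], i, hi, neg_pos.mpr hneg⟩
    · exact ⟨g, hg, i, hi, hpos⟩
  -- Move along the relation `g` until the first coefficient reaches zero.
  obtain ⟨j, hj, hmin⟩ := (s.filter (0 < g ·)).exists_min_image (fun i => c i / g i)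
    (by simpa [Finset.Nonempty] using hpos)
  rw [Finset.mem_filter] at hj
  set t := c j / g j
  refine ⟨j, hj.1, fun i => c i - t * g i, fun i hi => ?_, ?_⟩
  · have hi := Finset.mem_of_mem_erase hi
    rcases le_or_gt (g i) 0 with hgi | hgi
    · nlinarith [hc i hi, div_nonneg (hc j hj.1) hj.2.le]
    · have := hmin i (Finset.mem_filter.mpr ⟨hi, hgi⟩)
      rw [le_div_iff₀ hgi] at this
      linarith
  · have htj : c j - t * g j = 0 := by simp [t, hj.2.ne']
    rw [Finset.sum_erase _ (by simp only [htj, zero_smul])]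
    simp only [sub_smul, mul_smul, Finset.sum_sub_distrib, ← Finset.smul_sum, hg, smul_zero,
      sub_zero]

theorem exists_linearIndepOn_nonneg_sum_eq (v : ι → E) (s : Finset ι) (c : ι → 𝕜)
    (hc : ∀ i ∈ s, 0 ≤ c i) :
    ∃ t ⊆ s, LinearIndepOn 𝕜 v (t : Set ι) ∧
      ∃ d : ι → 𝕜, (∀ i ∈ t, 0 ≤ d i) ∧ ∑ i ∈ t, d i • v i = ∑ i ∈ s, c i • v i := by
  classical
  induction s using Finset.strongInduction generalizing c with
  | _ s ih =>
    by_cases hs : LinearIndepOn 𝕜 v (s : Set ι)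
    · exact ⟨s, subset_rfl, hs, c, hc, rfl⟩
    obtain ⟨j, hj, d, hd, hsum⟩ := exists_nonneg_sum_erase_eq_of_not_linearIndepOn hs hc
    obtain ⟨t, hts, ht, e, he, hesum⟩ := ih _ (s.erase_ssubset hj) d hd
    exact ⟨t, hts.trans (s.erase_subset j), ht, e, he, hesum.trans hsum⟩

end ConicCaratheodory

theorem exists_algebraMap_eq_of_linearIndepOn {K L ι κ : Type*} [Field K] [Field L]
    [Algebra K L] {v : ι → κ → K} {s : Finset ι}
    (hv : LinearIndepOn L (fun i => algebraMap K L ∘ v i) (s : Set ι)) {d : ι → L} {y : κ → K}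
    (h : ∑ i ∈ s, d i • (algebraMap K L ∘ v i) = algebraMap K L ∘ y) :
    ∃ q : ι → K, ∀ i ∈ s, algebraMap K L (q i) = d i := by
  obtain ⟨π, hπ⟩ := (Algebra.linearMap K L).exists_leftInverse_of_injective
    (LinearMap.ker_eq_bot.mpr (algebraMap K L).injective)
  have hπ' (q : K) : π (algebraMap K L q) = q := LinearMap.congr_fun hπ q
  have hπsum : ∑ i ∈ s, algebraMap K L (π (d i)) • (algebraMap K L ∘ v i) =
      algebraMap K L ∘ y := by
    funext k
    have hk := congr_fun h k
    simp only [Finset.sum_apply, Pi.smul_apply, Function.comp_apply, smul_eq_mul] at hk ⊢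
    rw [← hπ' (y k), ← hk, map_sum, map_sum]
    refine Finset.sum_congr rfl fun i _ => ?_
    rw [← map_mul, mul_comm (d i), ← Algebra.smul_def, map_smul, smul_eq_mul, mul_comm]
  refine ⟨fun i => π (d i), fun i hi => ?_⟩
  have hzero : ∑ i ∈ s, (d i - algebraMap K L (π (d i))) • (algebraMap K L ∘ v i) = 0 := by
    simp only [sub_smul, Finset.sum_sub_distrib, h, hπsum, sub_self]
  exact (sub_eq_zero.mp (linearIndepOn_finset_iff.mp hv _ hzero i hi)).symm

section Cones

variable {n : ℕ} {A : Finset (Fin n → ℤ)} {x : Fin n → ℝ}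

theorem algebraMap_comp_castQ (a : Fin n → ℤ) : algebraMap ℚ ℝ ∘ castQ a = castR a := by
  funext i
  simp [castQ, castR]

theorem exists_algebraMap_comp_eq_of_mem_ratSpan (hx : x ∈ ratSpan A) :
    ∃ y : Fin n → ℚ, algebraMap ℚ ℝ ∘ y = x := by
  obtain ⟨e, rfl⟩ := hx
  refine ⟨∑ a ∈ A, e a • castQ a, funext fun i => ?_⟩
  simp [Finset.sum_apply, castQ, castR]

theorem ratCone_subset_realCone : ratCone A ⊆ realCone A := fun _ ⟨q, hq, hx⟩ =>
  ⟨fun a => q a, fun a => Rat.cast_nonneg.mpr (hq a), hx⟩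

theorem ratCone_subset_ratSpan : ratCone A ⊆ ratSpan A := fun _ ⟨q, _, hx⟩ => ⟨q, hx⟩

theorem sum_mem_ratCone {S : Finset (Fin n → ℤ)} (hSA : S ⊆ A) {q : (Fin n → ℤ) → ℚ}
    (hq : ∀ a ∈ S, 0 ≤ q a) : ∑ a ∈ S, (q a : ℝ) • castR a ∈ ratCone A := by
  classical
  refine ⟨fun a => if a ∈ S then q a else 0, fun a => ?_, ?_⟩
  · dsimp only
    split_ifs with ha
    exacts [hq a ha, le_rfl]
  · rw [← Finset.sum_subset hSA fun a _ ha => by simp [ha]]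
    exact Finset.sum_congr rfl fun a ha => by simp [ha]

end Cones

/-- ℝ≥0A ∩ ℚA = ℚ≥0A. -/
theorem realCone_inter_ratSpan_eq_ratCone (n : ℕ) (A : Finset (Fin n → ℤ)) :
    realCone A ∩ ratSpan A = ratCone A := by
  refine Set.Subset.antisymm ?_ fun _ hx =>
    ⟨ratCone_subset_realCone hx, ratCone_subset_ratSpan hx⟩
  rintro x ⟨⟨c, hc, rfl⟩, hx⟩
  obtain ⟨y, hy⟩ := exists_algebraMap_comp_eq_of_mem_ratSpan hx
  obtain ⟨S, hSA, hS, d, hd, hdc⟩ :=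
    exists_linearIndepOn_nonneg_sum_eq castR A c fun a _ => hc a
  obtain ⟨q, hq⟩ := exists_algebraMap_eq_of_linearIndepOn (v := castQ) (d := d) (y := y)
    (by simpa only [algebraMap_comp_castQ] using hS)
    (by simp only [algebraMap_comp_castQ, hdc, hy])
  rw [← hdc, ← Finset.sum_congr rfl fun a ha => by rw [← hq a ha, eq_ratCast]]
  exact sum_mem_ratCone hSA fun a ha => Rat.cast_nonneg.mp ((hq a ha).trans_ge (hd a ha))
end

section
/- Let A ⊂ ℤ^n be normal (ℝ_{≥0}A ∩ ℤA = ℕA). Let a_A = Σ_{a∈A} a. Let b ∈ ℕA and F_1 a face of A such that b + c ∉ a_A + ℕA for all c ∈ ℕF_1. Then there exists a codimension-one face F of A containing F_1 such that l_F(b − a_A) < 0. -/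
open Finset

/-! Put `c = ∑_{a ∈ F₁} a` and `x = b - a_A + k • c`, with `k` larger than `-l_G(b - a_A)` for
every `G ⊆ A`. Since `b + k • c ∉ a_A + ℕA` and `A` is normal, `x ∈ ℤA` lies outside the cone
`ℝ_{≥0}A`. Farkas' lemma over `ℚ` (by Fourier–Motzkin elimination) separates `x` from the cone by a
functional `f ≥ 0` on `A`; among such `f`, one whose zeros in `A` span a hyperplane of `ℚA` defines a
codimension-one face `F = A ∩ ker f`. On `ℤA`, `l_F` is then a positive multiple of `f`, so
`l_F(b - a_A) + k • l_F(c) = l_F(x) < 0`. As `l_F(c) ∈ ℕ` and `k > -l_F(b - a_A)`, this forces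
`l_F(c) = 0`, i.e. `F₁ ⊆ F`, and `l_F(b - a_A) < 0`. -/

open Submodule PointedCone

section Farkas

variable {K V : Type*} [Field K] [AddCommGroup V] [Module K V]

def kerProj (f : V →ₗ[K] K) (a₀ : V) : V →ₗ[K] V :=
  LinearMap.id - (f a₀)⁻¹ • f.smulRight a₀

lemma kerProj_apply (f : V →ₗ[K] K) (a₀ v : V) :
    kerProj f a₀ v = v - ((f a₀)⁻¹ * f v) • a₀ := by
  simp [kerProj, mul_smul]

lemma kerProj_self {f : V →ₗ[K] K} {a₀ : V} (h : f a₀ ≠ 0) : kerProj f a₀ a₀ = 0 := by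
  rw [kerProj_apply, inv_mul_cancel₀ h, one_smul, sub_self]

variable [LinearOrder K] [IsStrictOrderedRing K]

lemma add_smul_mem_hull_insert {S : Set V} {a₀ v : V} {t : K} (ht : 0 ≤ t)
    (hv : v ∈ hull K S) : v + t • a₀ ∈ hull K (insert a₀ S) :=
  add_mem (span_mono (Set.subset_insert _ _) hv)
    (PointedCone.smul_mem _ ht (subset_hull (Set.mem_insert _ _)))

variable [DecidableEq V] {f : V →ₗ[K] K} {a₀ : V} {S : Finset V}

lemma hull_image_kerProj_le (hf : ∀ a ∈ S, 0 ≤ f a) (ha₀ : f a₀ < 0) :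
    hull K ↑(S.image (kerProj f a₀)) ≤ hull K (insert a₀ ↑S) := by
  rw [Finset.coe_image, span_le]
  rintro _ ⟨b, hb, rfl⟩
  rw [kerProj_apply, sub_eq_add_neg, ← neg_smul]
  refine add_smul_mem_hull_insert ?_ (subset_hull hb)
  have := mul_nonpos_of_nonpos_of_nonneg (inv_lt_zero.2 ha₀).le (hf b hb)
  linarith

lemma kerProj_notMem_hull_image (hf : ∀ a ∈ S, 0 ≤ f a) (ha₀ : f a₀ < 0) {x : V}
    (hfx : f x < 0) (hx : x ∉ hull K (insert a₀ ↑S)) :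
    kerProj f a₀ x ∉ hull K ↑(S.image (kerProj f a₀)) := by
  refine fun h => hx ?_
  have hx' := add_smul_mem_hull_insert (a₀ := a₀)
    (mul_pos_of_neg_of_neg (inv_lt_zero.2 ha₀) hfx).le (hull_image_kerProj_le hf ha₀ h)
  rwa [kerProj_apply, sub_add_cancel, Set.insert_eq_of_mem (Set.mem_insert _ _)] at hx'

theorem exists_nonneg_neg_of_notMem_hull (S : Finset V) {x : V} (hx : x ∉ hull K (S : Set V)) :
    ∃ f : V →ₗ[K] K, (∀ a ∈ S, 0 ≤ f a) ∧ f x < 0 := by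
  induction hk : S.card using Nat.strong_induction_on generalizing S x with
  | _ k ih =>
  subst hk
  rcases S.eq_empty_or_nonempty with rfl | ⟨a₀, ha₀⟩
  · have hx0 : x ≠ 0 := by rintro rfl; exact hx (zero_mem _)
    obtain ⟨g, hg⟩ : ∃ g : V →ₗ[K] K, g x ≠ 0 := by
      simpa using (Module.forall_dual_apply_eq_zero_iff K x).not.2 hx0
    rcases hg.lt_or_gt with h | h
    exacts [⟨g, by simp, h⟩, ⟨-g, by simp, by simpa⟩]
  have hcard := Finset.card_erase_lt_of_mem ha₀
  rw [← Finset.insert_erase ha₀, Finset.coe_insert] at hx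
  rw [← Finset.insert_erase ha₀]
  simp only [Finset.forall_mem_insert]
  obtain ⟨f, hf, hfx⟩ := ih _ hcard (S.erase a₀)
    (fun h => hx (span_mono (Set.subset_insert _ _) h)) rfl
  rcases le_or_gt 0 (f a₀) with hfa₀ | hfa₀
  · exact ⟨f, ⟨hfa₀, hf⟩, hfx⟩
  -- Fourier–Motzkin: eliminate `a₀` by projecting the remaining points along it onto `ker f`.
  obtain ⟨g, hg, hgx⟩ := ih _ (Finset.card_image_le.trans_lt hcard) _
    (kerProj_notMem_hull_image hf hfa₀ hfx hx) rfl
  exact ⟨g ∘ₗ kerProj f a₀, ⟨by simp [kerProj_self hfa₀.ne],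
    fun a ha => hg _ (Finset.mem_image_of_mem _ ha)⟩, hgx⟩

end Farkas

lemma exists_apply_ne_zero_of_mem_span {R V M : Type*} [Semiring R] [AddCommMonoid V]
    [Module R V] [AddCommMonoid M] [Module R M] {S : Set V} {g : V →ₗ[R] M} {w : V}
    (hw : w ∈ span R S) (hgw : g w ≠ 0) : ∃ a ∈ S, g a ≠ 0 := by
  by_contra! h
  exact hgw (LinearMap.eqOn_span' (g := 0) h hw)

section Facet

open Module

variable {K V : Type*} [Field K] [LinearOrder K] [AddCommGroup V] [Module K V]
  {S : Finset V} {f : V →ₗ[K] K} {x : V}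

variable (S) in
def spanZeros (f : V →ₗ[K] K) : Submodule K V := span K ↑{a ∈ S | f a = 0}

instance : FiniteDimensional K (spanZeros S f) := FiniteDimensional.span_finset K _

lemma spanZeros_le_span : spanZeros S f ≤ span K (S : Set V) :=
  span_mono (Finset.coe_subset.2 (Finset.filter_subset _ _))

lemma spanZeros_le_ker : spanZeros S f ≤ LinearMap.ker f :=
  span_le.2 fun _ ha => (Finset.mem_filter.1 ha).2

lemma finrank_spanZeros_lt (hxS : x ∈ span K (S : Set V)) (hfx : f x ≠ 0) :
    finrank K (spanZeros S f) < finrank K (span K (S : Set V)) :=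
  Submodule.finrank_lt_finrank_of_lt
    (lt_of_le_of_ne spanZeros_le_span fun h => hfx (spanZeros_le_ker (h ▸ hxS)))

lemma ker_inf_span_eq_spanZeros (hxS : x ∈ span K (S : Set V)) (hfx : f x ≠ 0)
    (hrank : finrank K (spanZeros S f) + 1 = finrank K (span K (S : Set V))) :
    LinearMap.ker f ⊓ span K (S : Set V) = spanZeros S f := by
  have hlt : LinearMap.ker f ⊓ span K (S : Set V) < span K (S : Set V) :=
    inf_lt_right.2 fun h => hfx (h hxS)
  have := Submodule.finrank_lt_finrank_of_lt hlt
  exact (Submodule.eq_of_le_of_finrank_le (le_inf spanZeros_le_ker spanZeros_le_span)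
    (by omega)).symm

variable [IsStrictOrderedRing K]

lemma exists_nonneg_spanZeros_lt {g : V →ₗ[K] K} (hf : ∀ a ∈ S, 0 ≤ f a)
    (hgf : spanZeros S f ≤ LinearMap.ker g) (hg : ∃ a ∈ S, g a < 0) :
    ∃ t : K, (∀ a ∈ S, 0 ≤ (f + t • g) a) ∧ spanZeros S f < spanZeros S (f + t • g) := by
  -- `t` is the largest step keeping `f + t • g` nonnegative on `S`; it is attained at `a`.
  obtain ⟨a, haT, hmin⟩ := Finset.exists_min_image {a ∈ S | g a < 0} (fun a => f a / -g a)
    (by simpa [Finset.Nonempty] using hg)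
  obtain ⟨haS, hga⟩ := Finset.mem_filter.1 haT
  have ht : 0 ≤ f a / -g a := div_nonneg (hf a haS) (neg_nonneg.2 hga.le)
  refine ⟨f a / -g a, fun b hb => ?_, lt_of_le_of_ne (span_mono ?_) fun h => ?_⟩
  · simp only [LinearMap.add_apply, LinearMap.smul_apply, smul_eq_mul]
    rcases lt_or_ge (g b) 0 with hgb | hgb
    · have := hmin b (Finset.mem_filter.2 ⟨hb, hgb⟩)
      rw [le_div_iff₀ (neg_pos.2 hgb)] at this
      linarith
    · exact add_nonneg (hf b hb) (mul_nonneg ht hgb)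
  · intro b hb
    obtain ⟨hbS, hfb⟩ := Finset.mem_filter.1 hb
    have hgb : g b = 0 := hgf (subset_span hb)
    simp [hbS, hfb, hgb]
  · have hza : (f + (f a / -g a) • g) a = 0 := by
      simp only [LinearMap.add_apply, LinearMap.smul_apply, smul_eq_mul]
      field_simp [hga.ne]
      ring
    exact hga.ne (hgf (h ▸ subset_span (Finset.mem_filter.2 ⟨haS, hza⟩)))

lemma exists_nonneg_neg_finrank_spanZeros_lt (hxS : x ∈ span K (S : Set V))
    (hf : ∀ a ∈ S, 0 ≤ f a) (hfx : f x < 0)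
    (hr : finrank K (spanZeros S f) + 1 < finrank K (span K (S : Set V))) :
    ∃ f' : V →ₗ[K] K, ((∀ a ∈ S, 0 ≤ f' a) ∧ f' x < 0) ∧
      finrank K (spanZeros S f) < finrank K (spanZeros S f') := by
  set W := spanZeros S f
  have hU : W ⊔ K ∙ x < span K (S : Set V) := by
    refine lt_of_le_of_ne (sup_le spanZeros_le_span ((span_singleton_le_iff_mem _ _).2 hxS))
      fun h => ?_
    have := Submodule.finrank_add_le_finrank_add_finrank W (K ∙ x)
    have := finrank_span_singleton (K := K) (v := x) (by rintro rfl; simp at hfx)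
    rw [h] at *
    omega
  obtain ⟨v, hvS, hvU⟩ := SetLike.exists_of_lt hU
  obtain ⟨g, hgv, hgU⟩ := Submodule.exists_dual_map_eq_bot_of_notMem hvU inferInstance
  rw [← LinearMap.le_ker_iff_map, sup_le_iff, span_singleton_le_iff_mem] at hgU
  obtain ⟨a, haS, hga⟩ := exists_apply_ne_zero_of_mem_span hvS hgv
  obtain ⟨g', hg'W, hg'x, hg'a⟩ : ∃ g' : V →ₗ[K] K,
      W ≤ LinearMap.ker g' ∧ g' x = 0 ∧ ∃ a ∈ S, g' a < 0 := by
    rcases hga.lt_or_gt with hga | hga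
    · exact ⟨g, hgU.1, hgU.2, a, haS, hga⟩
    · refine ⟨-g, fun w hw => ?_, by simpa using hgU.2, a, haS, by simpa using hga⟩
      simpa using hgU.1 hw
  obtain ⟨t, ht, hlt⟩ := exists_nonneg_spanZeros_lt hf hg'W hg'a
  exact ⟨f + t • g', ⟨ht, by simpa [hg'x] using hfx⟩, Submodule.finrank_lt_finrank_of_lt hlt⟩

theorem exists_nonneg_neg_finrank_spanZeros_of_notMem_hull (hxS : x ∈ span K (S : Set V))
    (hx : x ∉ hull K (S : Set V)) :
    ∃ f : V →ₗ[K] K, (∀ a ∈ S, 0 ≤ f a) ∧ f x < 0 ∧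
      finrank K (spanZeros S f) + 1 = finrank K (span K (S : Set V)) := by
  classical
  set r : (V →ₗ[K] K) → ℕ := fun f => finrank K (spanZeros S f)
  set good := {f : V →ₗ[K] K | (∀ a ∈ S, 0 ≤ f a) ∧ f x < 0}
  -- A separating functional with the largest span of zeros is a facet functional.
  obtain ⟨f, hf, hmax⟩ : ∃ f ∈ good, ∀ f' ∈ good, r f' ≤ r f := by
    have hbdd : BddAbove (r '' good) := ⟨finrank K (span K (S : Set V)), by
      rintro _ ⟨f, hf, rfl⟩
      exact (finrank_spanZeros_lt hxS hf.2.ne).le⟩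
    obtain ⟨f₀, hf₀⟩ := exists_nonneg_neg_of_notMem_hull S hx
    obtain ⟨f, hf, hfr⟩ := Nat.sSup_mem (Set.Nonempty.image r ⟨f₀, hf₀⟩) hbdd
    exact ⟨f, hf, fun f' hf' => hfr ▸ le_csSup hbdd ⟨f', hf', rfl⟩⟩
  refine ⟨f, hf.1, hf.2, ?_⟩
  have := finrank_spanZeros_lt hxS hf.2.ne
  by_contra hne
  obtain ⟨f', hf', hlt⟩ := exists_nonneg_neg_finrank_spanZeros_lt hxS hf.1 hf.2 (by omega)
  exact (hmax f' hf').not_gt hlt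

end Facet

lemma exists_pos_eq_mul_of_ker_inf_le {V : Type*} [AddCommGroup V] [Module ℚ V]
    {S : Finset V} {f : V →ₗ[ℚ] ℚ} {L : V →ₗ[ℚ] ℝ}
    (hker : LinearMap.ker f ⊓ span ℚ (S : Set V) ≤ LinearMap.ker L) (hf : ∀ a ∈ S, 0 ≤ f a)
    (hL : ∀ a ∈ S, 0 ≤ L a) (hf0 : ∃ a ∈ S, f a ≠ 0) (hL0 : ∃ a ∈ S, L a ≠ 0) :
    ∃ c : ℝ, 0 < c ∧ ∀ u ∈ span ℚ (S : Set V), L u = c * f u := by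
  obtain ⟨a, haS, hfa⟩ := hf0
  have hfa' : (0 : ℝ) < f a := by exact_mod_cast (hf a haS).lt_of_ne' hfa
  have hprop : ∀ u ∈ span ℚ (S : Set V), L u = L a / f a * f u := by
    intro u hu
    have hmem : u - (f u / f a) • a ∈ LinearMap.ker f ⊓ span ℚ (S : Set V) :=
      ⟨by simp [hfa], sub_mem hu (smul_mem _ _ (subset_span haS))⟩
    have h := LinearMap.mem_ker.1 (hker hmem)
    rw [map_sub, map_smul, sub_eq_zero, Rat.smul_def] at h
    rw [h]
    push_cast
    field_simp
  refine ⟨L a / f a, lt_of_le_of_ne (div_nonneg (hL a haS) hfa'.le) fun h => ?_, hprop⟩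
  obtain ⟨b, hbS, hLb⟩ := hL0
  exact hLb (by rw [hprop b (subset_span hbS), ← h, zero_mul])

lemma exists_nat_mul_eq_intCast {ι : Type*} (s : Finset ι) (q : ι → ℚ) :
    ∃ N : ℕ, 0 < N ∧ ∀ i ∈ s, ∃ m : ℤ, N * q i = m := by
  classical
  refine ⟨∏ i ∈ s, (q i).den, Finset.prod_pos fun i _ => (q i).pos, fun i hi =>
    ⟨(∏ j ∈ s.erase i, ((q j).den : ℤ)) * (q i).num, ?_⟩⟩
  rw [← Finset.mul_prod_erase s _ hi]
  push_cast
  rw [← Rat.mul_den_eq_num]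
  ring

lemma exists_addMonoidHom_int_of_closure {G : Type*} [AddGroup G] {s : Set G} (φ : G →+ ℚ)
    (hφ : ∀ a ∈ s, ∃ m : ℤ, φ a = m) :
    ∃ h : AddSubgroup.closure s →+ ℤ, ∀ v, (h v : ℚ) = φ v := by
  have hle : AddSubgroup.closure s ≤ (Int.castAddHom ℚ).range.comap φ :=
    (AddSubgroup.closure_le _).2 fun a ha => (hφ a ha).imp fun _ hm => hm.symm
  let e := AddMonoidHom.ofInjective (f := Int.castAddHom ℚ) Int.cast_injective
  refine ⟨e.symm.toAddMonoidHom.comp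
    ((φ.comp (AddSubgroup.closure s).subtype).codRestrict _ fun v => hle v.2), fun v => ?_⟩
  exact congrArg Subtype.val (e.apply_symm_apply ⟨φ v, hle v.2⟩)

section Lattice

open Module

variable {n : ℕ}

def castQHom (n : ℕ) : (Fin n → ℤ) →+ (Fin n → ℚ) := (Int.castAddHom ℚ).compLeft (Fin n)

noncomputable def castRHom (n : ℕ) : (Fin n → ℤ) →+ (Fin n → ℝ) :=
  (Int.castAddHom ℝ).compLeft (Fin n)

noncomputable def ratCastLin (n : ℕ) : (Fin n → ℚ) →ₗ[ℚ] (Fin n → ℝ) :=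
  (Algebra.linearMap ℚ ℝ).compLeft (Fin n)

lemma ratCastLin_castQ (v : Fin n → ℤ) : ratCastLin n (castQ v) = castR v := by
  ext i; simp [ratCastLin, castQ, castR]

lemma castQ_injective : Function.Injective (castQ (n := n)) :=
  fun _ _ h => funext fun i => by simpa [castQ] using congrFun h i

lemma map_castR_add_nsmul_sum (l : (Fin n → ℝ) →ₗ[ℝ] ℝ) (y : Fin n → ℤ) (k : ℕ)
    (s : Finset (Fin n → ℤ)) :
    l (castR (y + k • ∑ a ∈ s, a)) = l (castR y) + k * ∑ a ∈ s, l (castR a) := by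
  have hl : ∀ v, l (castR v) = l.toAddMonoidHom.comp (castRHom n) v := fun _ => rfl
  simp only [hl, map_add, map_nsmul, map_sum]
  rw [nsmul_eq_mul]

theorem isFace_filter_of_nonneg {A : Finset (Fin n → ℤ)} (φ : (Fin n → ℤ) →+ ℚ)
    (hφ : ∀ a ∈ A, 0 ≤ φ a) : IsFace A {a ∈ A | φ a = 0} := by
  obtain ⟨N, hN, hint⟩ := exists_nat_mul_eq_intCast A φ
  obtain ⟨h, hh⟩ := exists_addMonoidHom_int_of_closure (N • φ) fun a ha => by
    simpa using hint a ha
  refine ⟨Finset.filter_subset _ _, h, fun a ha => ?_⟩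
  have hN' : (0 : ℚ) < N := by exact_mod_cast hN
  have hha : (h ⟨a, AddSubgroup.subset_closure ha⟩ : ℚ) = N * φ a := by simpa using hh _
  constructor
  · exact_mod_cast hha ▸ mul_nonneg hN'.le (hφ a ha)
  · rw [Finset.mem_filter, ← Int.cast_eq_zero (α := ℚ), hha]
    simp [ha, hN'.ne']

lemma castQ_mem_span {A : Finset (Fin n → ℤ)} {v : Fin n → ℤ}
    (hv : v ∈ AddSubgroup.closure (A : Set (Fin n → ℤ))) :
    castQ v ∈ span ℚ (A.image castQ : Set (Fin n → ℚ)) :=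
  (AddSubgroup.closure_le ((span ℚ _).toAddSubgroup.comap (castQHom n))).2
    (fun _ ha => subset_span (Finset.mem_coe.2 (Finset.mem_image_of_mem _ ha))) hv

lemma castR_mem_realCone_of_castQ_mem_hull {A : Finset (Fin n → ℤ)} {v : Fin n → ℤ}
    (h : castQ v ∈ hull ℚ (A.image castQ : Set (Fin n → ℚ))) : castR v ∈ realCone A := by
  classical
  obtain ⟨c, -, hc⟩ := Submodule.mem_span_finset.1 h
  rw [Finset.sum_image fun _ _ _ _ hab => castQ_injective hab] at hc
  refine ⟨fun a => ((c (castQ a) : ℚ) : ℝ), fun a => by simpa using (c (castQ a)).2, ?_⟩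
  rw [← ratCastLin_castQ, ← hc, map_sum]
  refine Finset.sum_congr rfl fun a _ => ?_
  ext i
  simp [ratCastLin, castR, castQ, ← Nonneg.coe_smul]

lemma rkQ_filter_eq_finrank_spanZeros (A : Finset (Fin n → ℤ)) (f : (Fin n → ℚ) →ₗ[ℚ] ℚ) :
    rkQ {a ∈ A | f (castQ a) = 0} = finrank ℚ (spanZeros (A.image castQ) f) := by
  rw [rkQ, spanZeros, Finset.filter_image, Finset.coe_image]

theorem exists_facet_of_castR_notMem_realCone {A : Finset (Fin n → ℤ)} {x : Fin n → ℤ}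
    (hxZ : x ∈ AddSubgroup.closure (A : Set (Fin n → ℤ))) (hx : castR x ∉ realCone A) :
    ∃ f : (Fin n → ℚ) →ₗ[ℚ] ℚ, (∀ a ∈ A, 0 ≤ f (castQ a)) ∧ f (castQ x) < 0 ∧
      IsFace A {a ∈ A | f (castQ a) = 0} ∧ rkQ {a ∈ A | f (castQ a) = 0} + 1 = rkQ A := by
  classical
  obtain ⟨f, hf, hfx, hrank⟩ := exists_nonneg_neg_finrank_spanZeros_of_notMem_hull
    (castQ_mem_span hxZ) (mt castR_mem_realCone_of_castQ_mem_hull hx)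
  have hfA : ∀ a ∈ A, 0 ≤ f (castQ a) := fun a ha => hf _ (Finset.mem_image_of_mem _ ha)
  refine ⟨f, hfA, hfx, isFace_filter_of_nonneg (f.toAddMonoidHom.comp (castQHom n)) hfA, ?_⟩
  rwa [rkQ_filter_eq_finrank_spanZeros, rkQ, ← Finset.coe_image]

theorem exists_pos_map_castR_eq_mul {A : Finset (Fin n → ℤ)} {f : (Fin n → ℚ) →ₗ[ℚ] ℚ}
    {x : Fin n → ℤ} (lF : (Fin n → ℝ) →ₗ[ℝ] ℝ)
    (hf : ∀ a ∈ A, 0 ≤ f (castQ a)) (hxZ : x ∈ AddSubgroup.closure (A : Set (Fin n → ℤ)))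
    (hfx : f (castQ x) ≠ 0)
    (hrank : rkQ {a ∈ A | f (castQ a) = 0} + 1 = rkQ A)
    (hlF : ∀ a ∈ {a ∈ A | f (castQ a) = 0}, lF (castR a) = 0) (hlA : ∀ a ∈ A, 0 ≤ lF (castR a))
    (hlF0 : ∃ v ∈ AddSubgroup.closure (A : Set (Fin n → ℤ)), lF (castR v) ≠ 0) :
    ∃ c : ℝ, 0 < c ∧
      ∀ v ∈ AddSubgroup.closure (A : Set (Fin n → ℤ)), lF (castR v) = c * f (castQ v) := by
  classical
  rw [rkQ_filter_eq_finrank_spanZeros, rkQ, ← Finset.coe_image] at hrank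
  set L := (lF.restrictScalars ℚ).comp (ratCastLin n)
  have hL : ∀ v, L (castQ v) = lF (castR v) := fun v => congrArg lF (ratCastLin_castQ v)
  have hker : LinearMap.ker f ⊓ span ℚ (A.image castQ : Set (Fin n → ℚ)) ≤ LinearMap.ker L := by
    rw [ker_inf_span_eq_spanZeros (castQ_mem_span hxZ) hfx hrank, spanZeros, Finset.filter_image,
      Finset.coe_image, span_le]
    rintro _ ⟨a, ha, rfl⟩
    simp [hL, hlF a ha]
  obtain ⟨v, hvZ, hv⟩ := hlF0
  obtain ⟨c, hc, hLf⟩ := exists_pos_eq_mul_of_ker_inf_le hker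
    (Finset.forall_mem_image.2 hf) (Finset.forall_mem_image.2 fun a ha => (hL a).symm ▸ hlA a ha)
    (exists_apply_ne_zero_of_mem_span (castQ_mem_span hxZ) hfx)
    (exists_apply_ne_zero_of_mem_span (castQ_mem_span hvZ) ((hL v).symm ▸ hv))
  exact ⟨c, hc, fun v hv => hL v ▸ hLf _ (castQ_mem_span hv)⟩

end Lattice

lemma neg_and_forall_eq_zero_of_add_mul_sum_neg {ι : Type*} {s : Finset ι} {t : ι → ℝ}
    (ht : ∀ i ∈ s, ∃ m : ℕ, t i = m) {y : ℝ} {k : ℕ} (hk : -y < k)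
    (h : y + k * ∑ i ∈ s, t i < 0) : y < 0 ∧ ∀ i ∈ s, t i = 0 := by
  have ht0 : ∀ i ∈ s, 0 ≤ t i := fun i hi => by
    obtain ⟨m, hm⟩ := ht i hi
    exact hm ▸ m.cast_nonneg
  have hsum : ∑ i ∈ s, t i = 0 := by
    by_contra hne
    obtain ⟨i, hi, hti⟩ := Finset.exists_ne_zero_of_sum_ne_zero hne
    obtain ⟨m, hm⟩ := ht i hi
    have hti1 : (1 : ℝ) ≤ t i := by
      rw [hm] at hti ⊢
      exact_mod_cast Nat.one_le_iff_ne_zero.2 (by exact_mod_cast hti)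
    have := (Finset.single_le_sum ht0 hi).trans' hti1
    nlinarith [mul_le_mul_of_nonneg_left this k.cast_nonneg]
  exact ⟨by simpa [hsum] using h, (Finset.sum_eq_zero_iff_of_nonneg ht0).1 hsum⟩

/-- A normal, a_A = Σ_{a ∈ A} a, b ∈ ℕA, F₁ a face of A with
b + c ∉ a_A + ℕA for all c ∈ ℕF₁.  Then there is a codimension-one face F of A
containing F₁ with l_F(b − a_A) < 0. -/
theorem exists_codimOne_face_neg (n : ℕ) (A : Finset (Fin n → ℤ))
    (hA : IsNormal A) (aA : Fin n → ℤ) (haA : aA = ∑ a ∈ A, a)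
    (b : Fin n → ℤ) (hb : b ∈ AddSubmonoid.closure (A : Set (Fin n → ℤ)))
    (F₁ : Finset (Fin n → ℤ)) (hF₁ : IsFace A F₁)
    (hbc : ∀ c ∈ AddSubmonoid.closure (F₁ : Set (Fin n → ℤ)),
      ∀ d ∈ AddSubmonoid.closure (A : Set (Fin n → ℤ)), b + c ≠ aA + d)
    (l : Finset (Fin n → ℤ) → ((Fin n → ℝ) →ₗ[ℝ] ℝ))
    (hl : ∀ F, IsFace A F → rkQ F + 1 = rkQ A →
      (∀ a ∈ F, l F (castR a) = 0) ∧
      (∀ a ∈ A, ∃ m : ℕ, l F (castR a) = m) ∧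
      (∀ v ∈ AddSubgroup.closure (A : Set (Fin n → ℤ)), ∃ m : ℤ, l F (castR v) = m) ∧
      (∃ v ∈ AddSubgroup.closure (A : Set (Fin n → ℤ)), l F (castR v) = 1)) :
    ∃ F, IsFace A F ∧ rkQ F + 1 = rkQ A ∧ F₁ ⊆ F ∧ l F (castR (b - aA)) < 0 := by
  classical
  obtain ⟨M, hM⟩ := (A.powerset.image fun G => -l G (castR (b - aA))).exists_le
  obtain ⟨k, hk⟩ := exists_nat_gt M
  set x := b - aA + k • ∑ a ∈ F₁, a with hx
  have hxZ : x ∈ AddSubgroup.closure (A : Set (Fin n → ℤ)) :=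
    add_mem (sub_mem (AddSubmonoid.closure_le.2 AddSubgroup.subset_closure hb)
      (haA ▸ sum_mem fun a ha => AddSubgroup.subset_closure ha))
      (nsmul_mem (sum_mem fun a ha => AddSubgroup.subset_closure (hF₁.1 ha)) k)
  have hxcone : castR x ∉ realCone A := fun h =>
    hbc _ (nsmul_mem (sum_mem fun a ha => AddSubmonoid.subset_closure ha) k) x
      ((hA x).1 ⟨hxZ, h⟩) (by rw [hx]; abel)
  obtain ⟨f, hf, hfx, hface, hrkF⟩ := exists_facet_of_castR_notMem_realCone hxZ hxcone
  set F := {a ∈ A | f (castQ a) = 0}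
  obtain ⟨hlF, hlA, -, v, hvZ, hv⟩ := hl F hface hrkF
  obtain ⟨c, hc, hlf⟩ := exists_pos_map_castR_eq_mul (l F) hf hxZ hfx.ne hrkF hlF
    (fun a ha => let ⟨m, hm⟩ := hlA a ha; hm ▸ m.cast_nonneg) ⟨v, hvZ, by simp [hv]⟩
  have hlx : l F (castR x) < 0 := hlf x hxZ ▸ mul_neg_of_pos_of_neg hc (by exact_mod_cast hfx)
  obtain ⟨hneg, hzero⟩ := neg_and_forall_eq_zero_of_add_mul_sum_neg
    (fun a ha => hlA a (hF₁.1 ha))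
    ((hM _ (Finset.mem_image_of_mem _ (Finset.mem_powerset.2 (Finset.filter_subset _ _)))).trans_lt
      hk)
    (map_castR_add_nsmul_sum (l F) _ k F₁ ▸ hlx)
  refine ⟨F, hface, hrkF, fun a ha => Finset.mem_filter.2 ⟨hF₁.1 ha, ?_⟩, hneg⟩
  have := hlf a (AddSubgroup.subset_closure (hF₁.1 ha))
  rw [hzero a ha, eq_comm, mul_eq_zero] at this
  exact_mod_cast this.resolve_left hc.ne'
end

section
/- Let A ⊂ ℤ^n with ℤA = ℤ^n, and suppose F_1, ..., F_k are codimension-one faces of A such that every l-fold intersection F_{i_1} ∩ ... ∩ F_{i_l} (for 1 ≤ i_1 < ... < i_l ≤ k) is a face of A of codimension l. Let F' = F_1 ∩ ... ∩ F_k and q : ℝ^n → ℝ^n/ℝF' the quotient. Then q(ℝ_{≥0}A) is a simplicial cone of dimension k, i.e., it is generated by k linearly independent vectors. -/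
open Finset

/-!
Each facet `F i` is cut out of `A` by an integral functional that is nonnegative on `A`; extend
these to real functionals `L i` and let `H = (L i)ᵢ : ℝ^n → ℝ^k`. The rank condition forces, for
every `i`, a point `a i ∈ A` lying on every `F j` with `j ≠ i` but not on `F i`, so `H` sends
suitable positive multiples of the `a i` to the standard basis. Hence `H` is onto, its kernel
contains `ℝF'` and has dimension `n - k = dim ℝF'`, so `H` identifies `ℝ^n / ℝF'` with `ℝ^k` and
carries `q(ℝ≥0 A)` onto the nonnegative orthant, which is generated by the images of the `a i`.
-/

section Cone

variable {ι β V : Type*} [AddCommGroup V] [Module ℝ V]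

/-- `realCone A` is `finsetCone A castR`, and the cone in the conclusion of the theorem is
`finsetCone univ v`, both definitionally. -/
def finsetCone (A : Finset β) (f : β → V) : Set V :=
  {x | ∃ c : β → ℝ, (∀ b, 0 ≤ c b) ∧ x = ∑ b ∈ A, c b • f b}

lemma smul_mem_finsetCone [DecidableEq β] {A : Finset β} {f : β → V} {b : β} (hb : b ∈ A)
    {t : ℝ} (ht : 0 ≤ t) : t • f b ∈ finsetCone A f :=
  ⟨Pi.single b t, fun b' => by by_cases h : b' = b <;> simp [h, ht],
    by simp [Pi.single_apply, ite_smul, hb]⟩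

lemma sum_smul_mem_finsetCone {s : Finset ι} {A : Finset β} {f : β → V}
    {c : ι → ℝ} {w : ι → V} (hc : ∀ i ∈ s, 0 ≤ c i) (hw : ∀ i ∈ s, w i ∈ finsetCone A f) :
    ∑ i ∈ s, c i • w i ∈ finsetCone A f := by
  choose! e he hew using hw
  refine ⟨fun b => ∑ i ∈ s, c i * e i b,
    fun b => sum_nonneg fun i hi => mul_nonneg (hc i hi) (he i hi b), ?_⟩
  rw [sum_congr rfl fun i hi => by rw [hew i hi]]
  simp only [smul_sum, sum_smul, mul_smul]
  exact sum_comm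

lemma map_nonneg_of_mem_finsetCone {A : Finset β} {f : β → V} (H : V →ₗ[ℝ] ι → ℝ)
    (hf : ∀ b ∈ A, 0 ≤ H (f b)) {x : V} (hx : x ∈ finsetCone A f) : 0 ≤ H x := by
  obtain ⟨c, hc, rfl⟩ := hx
  rw [map_sum]
  exact sum_nonneg fun b hb => by rw [map_smul]; exact smul_nonneg (hc b) (hf b hb)

lemma exists_mem_finsetCone_pi_eq_single [DecidableEq ι] [DecidableEq β] {A : Finset β}
    {f : β → V} (L : ι → V →ₗ[ℝ] ℝ) {a : ι → β} (haA : ∀ i, a i ∈ A) (hpos : ∀ i, 0 < L i (f (a i)))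
    (hzero : ∀ i j, j ≠ i → L j (f (a i)) = 0) :
    ∃ d : ι → V, (∀ i, d i ∈ finsetCone A f) ∧ ∀ i, LinearMap.pi L (d i) = Pi.single i 1 := by
  refine ⟨fun i => (L i (f (a i)))⁻¹ • f (a i),
    fun i => smul_mem_finsetCone (haA i) (inv_nonneg.mpr (hpos i).le), fun i => ?_⟩
  ext j
  rcases eq_or_ne j i with rfl | hji
  · simp [(hpos j).ne']
  · simp [hzero i j hji, hji]

lemma image_mkQ_finsetCone [Fintype ι] [DecidableEq ι] {A : Finset β} {f : β → V}
    {W : Submodule ℝ V} (H : V →ₗ[ℝ] ι → ℝ) (hker : LinearMap.ker H = W) (hf : ∀ b ∈ A, 0 ≤ H (f b))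
    {d : ι → V} (hdA : ∀ i, d i ∈ finsetCone A f) (hd : ∀ i, H (d i) = Pi.single i 1) :
    W.mkQ '' finsetCone A f = finsetCone univ (fun i => W.mkQ (d i)) := by
  ext y
  constructor
  · rintro ⟨x, hx, rfl⟩
    refine ⟨fun i => H x i, fun i => map_nonneg_of_mem_finsetCone H hf hx i, ?_⟩
    simp_rw [← LinearMap.map_smul, ← map_sum, Submodule.mkQ_apply, Submodule.Quotient.eq, ← hker,
      LinearMap.mem_ker, map_sub, map_sum, map_smul, hd, sub_eq_zero]
    exact pi_eq_sum_univ' (H x)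
  · rintro ⟨c, hc, rfl⟩
    exact ⟨∑ i, c i • d i, sum_smul_mem_finsetCone (fun i _ => hc i) (fun i _ => hdA i),
      by simp⟩

end Cone

lemma linearIndependent_of_map_eq_single {ι R M : Type*} [DecidableEq ι] [Semiring R]
    [AddCommMonoid M] [Module R M] (T : M →ₗ[R] ι → R) {w : ι → M}
    (hw : ∀ i, T (w i) = Pi.single i 1) :
    LinearIndependent R w :=
  LinearIndependent.of_comp T (by simpa [Function.comp_def, hw] using
    Pi.linearIndependent_single_one ι R)

lemma range_eq_top_of_map_eq_single {ι R M : Type*} [Fintype ι] [DecidableEq ι] [Semiring R]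
    [AddCommMonoid M] [Module R M] (T : M →ₗ[R] ι → R) {w : ι → M}
    (hw : ∀ i, T (w i) = Pi.single i 1) :
    LinearMap.range T = ⊤ :=
  eq_top_iff.mpr <| (Pi.basisFun R ι).span_eq ▸
    Submodule.span_le.mpr (Set.range_subset_iff.mpr fun i => ⟨w i, by simp [hw]⟩)

lemma ker_eq_of_le_of_range_eq_top {ι K V : Type*} [Fintype ι] [Field K] [AddCommGroup V]
    [Module K V] [FiniteDimensional K V] {W : Submodule K V} (T : V →ₗ[K] ι → K)
    (hW : W ≤ LinearMap.ker T) (hT : LinearMap.range T = ⊤)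
    (hdim : Module.finrank K V ≤ Module.finrank K W + Fintype.card ι) : LinearMap.ker T = W := by
  refine (Submodule.eq_of_le_of_finrank_le hW ?_).symm
  have := T.finrank_range_add_finrank_ker
  rw [hT, finrank_top, Module.finrank_fintype_fun_eq_card] at this
  omega

lemma exists_mem_forall_ne_mem {α ι : Type*} [Fintype ι] [DecidableEq ι] [DecidableEq α]
    {A : Finset α} {F : ι → Finset α} {r : Finset α → ℕ} (hsub : ∀ i, F i ⊆ A)
    (hr : ∀ (s : Finset ι) (hs : s.Nonempty), r (s.inf' hs F) + s.card = r A) (i : ι) :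
    ∃ b ∈ A, b ∉ F i ∧ ∀ j ≠ i, b ∈ F j := by
  -- `A.filter` extends the intersections of the `F j` to `s = ∅`.
  have hfilter : ∀ s : Finset ι, r (A.filter fun b => ∀ j ∈ s, b ∈ F j) + s.card = r A := by
    intro s
    rcases s.eq_empty_or_nonempty with rfl | hs
    · simp
    · have ⟨j, hj⟩ := hs
      have : (A.filter fun b => ∀ j ∈ s, b ∈ F j) = s.inf' hs F := by
        ext b
        rw [mem_filter, mem_inf', and_iff_right_iff_imp]
        exact fun h => hsub j (h j hj)
      rw [this]
      exact hr s hs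
  -- Otherwise dropping `F i` leaves the intersection unchanged, though by `hr` it changes its rank.
  by_contra! h
  have hon : ∀ b ∈ A, (∀ j ≠ i, b ∈ F j) → b ∈ F i := fun b hb hne => by
    by_contra hbi
    obtain ⟨j, hji, hbj⟩ := h b hb hbi
    exact hbj (hne j hji)
  have hsame : (A.filter fun b => ∀ j ∈ univ.erase i, b ∈ F j) =
      A.filter fun b => ∀ j ∈ univ, b ∈ F j := filter_congr fun b hb => by
    simp only [mem_erase, mem_univ, and_true, forall_const]
    exact ⟨fun hne j => if hji : j = i then hji ▸ hon b hb hne else hne j hji,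
      fun hall j _ => hall j⟩
  have h1 := hfilter (univ.erase i)
  have h2 := hfilter univ
  rw [hsame, card_erase_of_mem (mem_univ i)] at h1
  have : 0 < (univ : Finset ι).card := card_pos.mpr ⟨i, mem_univ i⟩
  omega

section Lattice

variable {n : ℕ}

lemma exists_linearMap_castR_eq (g : (Fin n → ℤ) →+ ℤ) :
    ∃ L : (Fin n → ℝ) →ₗ[ℝ] ℝ, ∀ a, L (castR a) = g a := by
  refine ⟨∑ j, (g (Pi.single j 1) : ℝ) • LinearMap.proj j, fun a => ?_⟩
  conv_rhs => rw [pi_eq_sum_univ' a, map_sum]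
  simp only [map_zsmul]
  push_cast
  simp [castR, mul_comm]

lemma IsFace.exists_linearMap {A F : Finset (Fin n → ℤ)}
    (hA : AddSubgroup.closure (A : Set (Fin n → ℤ)) = ⊤) (hF : IsFace A F) :
    ∃ L : (Fin n → ℝ) →ₗ[ℝ] ℝ, ∀ a ∈ A, 0 ≤ L (castR a) ∧ (a ∈ F ↔ L (castR a) = 0) := by
  obtain ⟨-, h, hh⟩ := hF
  obtain ⟨L, hL⟩ := exists_linearMap_castR_eq
    (h.comp ((AddMonoidHom.id _).codRestrict _ fun x => hA ▸ AddSubgroup.mem_top x))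
  refine ⟨L, fun a ha => ?_⟩
  simpa [hL] using hh a ha

lemma rkQ_le_finrank_span_castR (S : Finset (Fin n → ℤ)) :
    rkQ S ≤ Module.finrank ℝ (Submodule.span ℝ (castR '' (S : Set (Fin n → ℤ)))) := by
  obtain ⟨b, hbS, hspan, hb⟩ := exists_linearIndependent ℚ (castQ '' (S : Set (Fin n → ℤ)))
  have : Fintype b := ((S.finite_toSet.image castQ).subset hbS).fintype
  have hbR : LinearIndependent ℝ fun x : b => algebraMap ℚ ℝ ∘ (x : Fin n → ℚ) :=
    linearIndependent_algebraMap_comp_iff.mpr hb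
  calc rkQ S = Fintype.card b := by
        rw [rkQ, ← hspan, ← finrank_span_eq_card hb, Subtype.range_coe]
    _ = Module.finrank ℝ
          (Submodule.span ℝ (Set.range fun x : b => algebraMap ℚ ℝ ∘ (x : Fin n → ℚ))) :=
        (finrank_span_eq_card hbR).symm
    _ ≤ _ := by
        refine Submodule.finrank_mono (Submodule.span_mono ?_)
        rintro _ ⟨⟨x, hx⟩, rfl⟩
        obtain ⟨a, ha, rfl⟩ := hbS hx
        exact ⟨a, ha, by ext; simp [castR, castQ]⟩

lemma rkQ_eq_of_closure_eq_top {A : Finset (Fin n → ℤ)}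
    (hA : AddSubgroup.closure (A : Set (Fin n → ℤ)) = ⊤) : rkQ A = n := by
  set S := Submodule.span ℚ (castQ '' (A : Set (Fin n → ℤ)))
  have hcast : ∀ v, castQ v ∈ S := by
    have : AddSubgroup.closure (A : Set (Fin n → ℤ)) ≤
        S.toAddSubgroup.comap ((Int.castAddHom ℚ).compLeft (Fin n)) :=
      (AddSubgroup.closure_le _).mpr fun a ha => Submodule.subset_span ⟨a, ha, rfl⟩
    exact fun v => this (hA ▸ AddSubgroup.mem_top v)
  have hS : S = ⊤ := eq_top_iff.mpr <| (Pi.basisFun ℚ (Fin n)).span_eq ▸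
    Submodule.span_le.mpr (Set.range_subset_iff.mpr fun j =>
      (show castQ (Pi.single j 1) = Pi.basisFun ℚ (Fin n) j by
        ext; simp [castQ, Pi.single_apply]) ▸ hcast _)
  change Module.finrank ℚ S = n
  rw [hS, finrank_top, Module.finrank_fin_fun]

end Lattice

/-- ℤA = ℤ^n, F_1, …, F_k codimension-one faces of A whose l-fold
intersections are faces of codimension l.  Let F' be the intersection of all of
them and q : ℝ^n → ℝ^n/ℝF' the quotient map.  Then q(ℝ≥0A) is a simplicial cone
generated by k linearly independent vectors. -/
theorem quotient_cone_simplicial (n k : ℕ) (hk : 0 < k) (A : Finset (Fin n → ℤ))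
    (hZA : AddSubgroup.closure (A : Set (Fin n → ℤ)) = ⊤)
    (F : Fin k → Finset (Fin n → ℤ))
    (hF : ∀ s : Finset (Fin k), ∀ hs : s.Nonempty,
      IsFace A (s.inf' hs F) ∧ rkQ (s.inf' hs F) + s.card = rkQ A)
    (W : Submodule ℝ (Fin n → ℝ))
    (hW : W = Submodule.span ℝ (castR ''
      ((Finset.univ.inf' (Finset.univ_nonempty_iff.mpr ⟨⟨0, hk⟩⟩) F : Finset (Fin n → ℤ)) :
        Set (Fin n → ℤ)))) :
    ∃ v : Fin k → ((Fin n → ℝ) ⧸ W), LinearIndependent ℝ v ∧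
      W.mkQ '' realCone A =
        {x | ∃ c : Fin k → ℝ, (∀ i, 0 ≤ c i) ∧ x = ∑ i, c i • v i} := by
  classical
  have hfacet : ∀ i, IsFace A (F i) := fun i => by simpa using (hF {i} (singleton_nonempty i)).1
  choose L hL using fun i => (hfacet i).exists_linearMap hZA
  choose a haA haF using
    exists_mem_forall_ne_mem (fun i => (hfacet i).1) (fun s hs => (hF s hs).2)
  obtain ⟨d, hdA, hd⟩ := exists_mem_finsetCone_pi_eq_single (f := castR) L haA
    (fun i => (hL i _ (haA i)).1.lt_of_ne' fun h => (haF i).1 ((hL i _ (haA i)).2.mpr h))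
    (fun i j hji => (hL j _ (haA i)).2.mp ((haF i).2 j hji))
  have hWH : W ≤ LinearMap.ker (LinearMap.pi L) := by
    rw [hW, Submodule.span_le]
    rintro _ ⟨b, hb, rfl⟩
    have hbF : ∀ j, b ∈ F j := fun j => (mem_inf' _).mp hb j (mem_univ j)
    ext j
    exact (hL j b ((hfacet j).1 (hbF j))).2.mp (hbF j)
  have hdim : n ≤ Module.finrank ℝ W + k := by
    have hne : (univ : Finset (Fin k)).Nonempty := univ_nonempty_iff.mpr ⟨⟨0, hk⟩⟩
    have hrk := (hF univ hne).2
    rw [card_univ, Fintype.card_fin, rkQ_eq_of_closure_eq_top hZA] at hrk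
    have := hW ▸ rkQ_le_finrank_span_castR (univ.inf' hne F)
    omega
  have hker := ker_eq_of_le_of_range_eq_top _ hWH (range_eq_top_of_map_eq_single _ hd)
    (by simpa using hdim)
  exact ⟨fun i => W.mkQ (d i),
    linearIndependent_of_map_eq_single (W.liftQ _ hWH) (by simpa using hd),
    image_mkQ_finsetCone _ hker (fun b hb i => (hL i b hb).1) hdA hd⟩
end
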